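/- For every real $\nu$ with $-1<\nu<0$ and every $z>0$, the modified Bessel functions satisfy $I_\nu(z) - I_{-\nu}(z) \ge 0$, where $I_\nu(z)=\sum_{k=0}^\infty \frac{(z/2)^{2k+\nu}}{k!\,\Gamma(k+\nu+1)}$. -/

import Mathlib

/-!
Put `b = -ν`, `x = (z/2)^2` and `S_c(x) = ∑ x^k / (k! Γ(k+c+1))`, an entire function of `x`.
Then `I_ν(z) - I_{-ν}(z) = (z/2)^ν (S_{-b}(x) - x^b S_b(x))`, and the bracket is, up to the
factor `Γ(b)Γ(1-b) > 0`, the Macdonald integral `Φ_b(x) = ∫₀^∞ exp(-u - x/u) u^(b-1) du`.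
To see this, note that `(Φ_b, Φ_{1-b})`, `(S_{-b}, -x^(1-b) S_{1-b})` and `(x^b S_b, -S_{b-1})`
all solve the system `y₁' = -x^(b-1) y₂`, `y₂' = -x^(-b) y₁` on `x > 0`. Wronskians of two
solutions are constant, hence equal to their limits at `0+`, which are explicit; Cramer's rule
then expresses `Φ_b` in terms of the two series solutions.
-/

noncomputable section
open Real

/-- The modified Bessel function of the first kind and order `ν`,
`I_ν(z) = ∑_{k=0}^∞ (z/2)^(2k+ν) / (k! Γ(k+ν+1))`. -/
def besselI (ν z : ℝ) : ℝ :=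
  ∑' k : ℕ, (z / 2) ^ (2 * (k : ℝ) + ν) / ((Nat.factorial k : ℝ) * Real.Gamma ((k : ℝ) + ν + 1))

open MeasureTheory Set Filter Topology
open scoped Nat

section PowerSeries

variable {a : ℕ → ℝ} {C : ℝ}

theorem summable_mul_pow_of_abs_le_div_factorial (ha : ∀ k, |a k| ≤ C / k !) (x : ℝ) :
    Summable fun k ↦ a k * x ^ k := by
  refine .of_norm_bounded ((summable_pow_div_factorial |x|).mul_left C) fun k ↦ ?_
  rw [norm_mul, norm_pow, norm_eq_abs, norm_eq_abs, mul_div_assoc', mul_div_right_comm]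
  exact mul_le_mul_of_nonneg_right (ha k) (by positivity)

theorem hasDerivAt_tsum_mul_pow_of_abs_le_div_factorial (ha : ∀ k, |a k| ≤ C / k !) (x : ℝ) :
    HasDerivAt (fun y ↦ ∑' k, a k * y ^ k) (∑' k, (k + 1) * a (k + 1) * x ^ k) x := by
  set R := |x| + 1
  have hbound : ∀ k, ∀ y ∈ Metric.ball (0 : ℝ) R,
      ‖a k * (k * y ^ (k - 1))‖ ≤ C * (R ^ (k - 1) / (k - 1)!) := by
    have hC : 0 ≤ C := by simpa using (abs_nonneg _).trans (ha 0)
    rintro (_ | k) y hy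
    · simpa using hC
    have hyR : |y| ≤ R := by simpa using (mem_ball_zero_iff.1 hy).le
    have hk := ha (k + 1)
    rw [Nat.factorial_succ, Nat.cast_mul, ← div_div, Nat.cast_succ] at hk
    rw [norm_mul, norm_mul, norm_pow, norm_eq_abs, norm_eq_abs, Nat.add_sub_cancel,
      Nat.cast_succ, abs_of_pos (by positivity : (0 : ℝ) < k + 1)]
    calc |a (k + 1)| * ((k + 1) * |y| ^ k) ≤ C / (k + 1) / k ! * ((k + 1) * R ^ k) := by
          gcongr
      _ = C * (R ^ k / k !) := by field_simp
  have hu : Summable fun k ↦ C * (R ^ (k - 1) / (k - 1)!) := by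
    refine (summable_nat_add_iff 1).1 ?_
    simpa using (summable_pow_div_factorial R).mul_left C
  have hsum : Summable fun k ↦ a k * (k * x ^ (k - 1)) :=
    .of_norm_bounded hu fun k ↦ hbound k x (by simp [R])
  have h := hasDerivAt_tsum_of_isPreconnected hu Metric.isOpen_ball
    (convex_ball (0 : ℝ) R).isPreconnected (fun k y _ ↦ (hasDerivAt_pow k y).const_mul (a k))
    hbound (y₀ := 0) (y := x) (Metric.mem_ball_self (by positivity))
    (summable_mul_pow_of_abs_le_div_factorial ha 0) (by simp [R])
  rw [hsum.tsum_eq_zero_add, Nat.cast_zero, zero_mul, mul_zero, zero_add] at h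
  simpa [mul_comm, mul_left_comm] using h

end PowerSeries

theorem exists_abs_inv_Gamma_nat_add_le (c : ℝ) : ∃ C, ∀ k : ℕ, |(Gamma (k + c))⁻¹| ≤ C := by
  have hev : ∀ᶠ k : ℕ in atTop, |(Gamma (k + c))⁻¹| ≤ 1 := by
    filter_upwards [eventually_ge_atTop ⌈2 - c⌉₊] with k hk
    have h2 : 2 ≤ k + c := by linarith [Nat.le_ceil (2 - c), (Nat.cast_le (α := ℝ)).2 hk]
    have h1 : 1 ≤ Gamma (k + c) :=
      Gamma_two ▸ Gamma_strictMonoOn_Ici.monotoneOn self_mem_Ici h2 h2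
    rw [abs_inv, abs_of_pos (by linarith)]
    exact inv_le_one_of_one_le₀ h1
  obtain ⟨C, hC⟩ := (isBoundedUnder_of_eventually_le hev).bddAbove_range
  exact ⟨C, fun k ↦ hC ⟨k, rfl⟩⟩

/-- Where `k + c + 1` is a pole of `Γ`, Mathlib's `Gamma` is `0`, so the inverse is the correct
value `1 / Γ = 0`. -/
def besselCoeff (c : ℝ) (k : ℕ) : ℝ := ((k ! : ℝ) * Gamma (k + c + 1))⁻¹

/-- `₀F₁(; c + 1; x) / Γ(c + 1)`. -/
def besselSeries (c x : ℝ) : ℝ := ∑' k, besselCoeff c k * x ^ k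

theorem exists_abs_besselCoeff_le (c : ℝ) : ∃ C, ∀ k, |besselCoeff c k| ≤ C / k ! := by
  obtain ⟨C, hC⟩ := exists_abs_inv_Gamma_nat_add_le (c + 1)
  refine ⟨C, fun k ↦ ?_⟩
  rw [besselCoeff, mul_inv, abs_mul, abs_inv, Nat.abs_cast, add_assoc, inv_mul_eq_div]
  exact div_le_div_of_nonneg_right (hC k) (by positivity)

theorem besselCoeff_succ (c : ℝ) (k : ℕ) :
    (k + 1) * besselCoeff c (k + 1) = besselCoeff (c + 1) k := by
  rw [besselCoeff, besselCoeff, Nat.factorial_succ]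
  push_cast
  rw [show (k : ℝ) + 1 + c + 1 = k + (c + 1) + 1 by ring, mul_assoc, mul_inv (_ + 1),
    mul_inv_cancel_left₀ (by positivity)]

theorem add_mul_besselCoeff (c : ℝ) (k : ℕ) :
    (k + c) * besselCoeff c k = besselCoeff (c - 1) k := by
  rw [besselCoeff, besselCoeff, add_assoc _ (c - 1), sub_add_cancel]
  rcases eq_or_ne ((k : ℝ) + c) 0 with h | h
  · simp [h]
  · rw [Gamma_add_one h, mul_left_comm, mul_inv (_ + c), mul_inv_cancel_left₀ h]

theorem summable_besselSeries (c x : ℝ) : Summable fun k ↦ besselCoeff c k * x ^ k :=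
  (exists_abs_besselCoeff_le c).elim fun _ hC ↦ summable_mul_pow_of_abs_le_div_factorial hC x

theorem hasDerivAt_besselSeries (c x : ℝ) :
    HasDerivAt (besselSeries c) (besselSeries (c + 1) x) x := by
  obtain ⟨C, hC⟩ := exists_abs_besselCoeff_le c
  have h := hasDerivAt_tsum_mul_pow_of_abs_le_div_factorial hC x
  simp only [besselCoeff_succ] at h
  exact h

theorem besselSeries_zero (c : ℝ) : besselSeries c 0 = (Gamma (c + 1))⁻¹ := by
  rw [besselSeries, tsum_eq_single 0 fun k hk ↦ by simp [hk]]
  simp [besselCoeff]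

theorem besselSeries_sub_one (c x : ℝ) :
    besselSeries (c - 1) x = c * besselSeries c x + x * besselSeries (c + 1) x := by
  have hterm : ∀ k : ℕ, besselCoeff (c - 1) k * x ^ k =
      c * (besselCoeff c k * x ^ k) + k * besselCoeff c k * x ^ k := fun k ↦ by
    rw [← add_mul_besselCoeff]; ring
  have hsum : Summable fun k : ℕ ↦ k * besselCoeff c k * x ^ k :=
    ((summable_besselSeries (c - 1) x).sub ((summable_besselSeries c x).mul_left c)).congr
      fun k ↦ by rw [hterm]; ring
  have hshift : ∑' k : ℕ, k * besselCoeff c k * x ^ k = x * besselSeries (c + 1) x := by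
    rw [hsum.tsum_eq_zero_add, besselSeries, ← tsum_mul_left]
    simp only [CharP.cast_eq_zero, zero_mul, zero_add, ← besselCoeff_succ]
    congr 1 with k
    push_cast
    ring
  rw [besselSeries, tsum_congr hterm, ((summable_besselSeries c x).mul_left c).tsum_add hsum,
    tsum_mul_left, hshift]
  rfl

theorem hasDerivAt_rpow_mul_besselSeries (c : ℝ) {x : ℝ} (hx : 0 < x) :
    HasDerivAt (fun y ↦ y ^ c * besselSeries c y) (x ^ (c - 1) * besselSeries (c - 1) x) x := by
  refine ((hasDerivAt_rpow_const (p := c) (Or.inl hx.ne')).mul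
    (hasDerivAt_besselSeries c x)).congr_deriv ?_
  have hpow : x ^ c = x ^ (c - 1) * x := by rw [← rpow_add_one hx.ne', sub_add_cancel]
  rw [besselSeries_sub_one, hpow]
  ring

/-- Eliminating `y₂` gives `x y₁'' + (1 - b) y₁' = y₁`. -/
def SolvesBesselSystem (b : ℝ) (y₁ y₂ : ℝ → ℝ) : Prop :=
  ∀ x > 0, HasDerivAt y₁ (-(x ^ (b - 1) * y₂ x)) x ∧ HasDerivAt y₂ (-(x ^ (-b) * y₁ x)) x

theorem SolvesBesselSystem.wronskian_eq {b p₁ p₂ q₁ q₂ : ℝ} {y₁ y₂ z₁ z₂ : ℝ → ℝ}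
    (hy : SolvesBesselSystem b y₁ y₂) (hz : SolvesBesselSystem b z₁ z₂)
    (hy₁ : Tendsto y₁ (𝓝[>] 0) (𝓝 p₁)) (hy₂ : Tendsto y₂ (𝓝[>] 0) (𝓝 p₂))
    (hz₁ : Tendsto z₁ (𝓝[>] 0) (𝓝 q₁)) (hz₂ : Tendsto z₂ (𝓝[>] 0) (𝓝 q₂))
    {x : ℝ} (hx : 0 < x) :
    y₁ x * z₂ x - y₂ x * z₁ x = p₁ * q₂ - p₂ * q₁ := by
  set W := fun t ↦ y₁ t * z₂ t - y₂ t * z₁ t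
  have hW : ∀ t > 0, HasDerivAt W 0 t := fun t ht ↦ by
    obtain ⟨hy₁', hy₂'⟩ := hy t ht
    obtain ⟨hz₁', hz₂'⟩ := hz t ht
    refine ((hy₁'.mul hz₂').sub (hy₂'.mul hz₁')).congr_deriv ?_
    ring
  have hconst : ∀ t > 0, W t = W x := fun t ht ↦
    isOpen_Ioi.is_const_of_deriv_eq_zero isPreconnected_Ioi
      (fun s hs ↦ (hW s hs).differentiableAt.differentiableWithinAt) (fun s hs ↦ (hW s hs).deriv)
      ht hx
  refine tendsto_nhds_unique ?_ ((hy₁.mul hz₂).sub (hy₂.mul hz₁))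
  exact tendsto_const_nhds.congr' (eventually_nhdsWithin_of_forall fun t ht ↦ (hconst t ht).symm)

theorem solvesBesselSystem_rpow_mul_besselSeries (b : ℝ) :
    SolvesBesselSystem b (fun x ↦ x ^ b * besselSeries b x) (fun x ↦ -besselSeries (b - 1) x) := by
  intro x hx
  constructor
  · simpa using hasDerivAt_rpow_mul_besselSeries b hx
  · refine (hasDerivAt_besselSeries (b - 1) x).neg.congr_deriv ?_
    rw [sub_add_cancel, ← mul_assoc, ← rpow_add hx, neg_add_cancel, rpow_zero, one_mul]

theorem solvesBesselSystem_besselSeries (b : ℝ) :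
    SolvesBesselSystem b (besselSeries (-b))
      (fun x ↦ -(x ^ (1 - b) * besselSeries (1 - b) x)) := by
  intro x hx
  constructor
  · refine (hasDerivAt_besselSeries (-b) x).congr_deriv ?_
    rw [mul_neg, neg_neg, ← mul_assoc, ← rpow_add hx]
    simp [neg_add_eq_sub]
  · refine (hasDerivAt_rpow_mul_besselSeries (1 - b) hx).neg.congr_deriv ?_
    rw [show 1 - b - 1 = -b by ring]

/-- For `x > 0` this is `2 x^(b/2) K_b(2√x)`, `K_b` the Macdonald function. -/
def macdonaldIntegral (b x : ℝ) : ℝ := ∫ u in Ioi 0, exp (-u - x / u) * u ^ (b - 1)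

theorem macdonaldIntegral_nonneg (b x : ℝ) : 0 ≤ macdonaldIntegral b x :=
  setIntegral_nonneg measurableSet_Ioi fun u hu ↦ by
    have := rpow_pos_of_pos hu (b - 1)
    positivity

theorem continuousOn_exp_neg_sub_div_mul_rpow (x p : ℝ) :
    ContinuousOn (fun u ↦ exp (-u - x / u) * u ^ p) (Ioi 0) := by
  have hne : ∀ u ∈ Ioi (0 : ℝ), u ≠ 0 := fun u hu ↦ ne_of_gt hu
  exact ((continuousOn_neg.sub (continuousOn_const.div continuousOn_id hne)).rexp).mul
    (continuousOn_id.rpow_const fun u hu ↦ Or.inl (hne u hu))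

theorem exp_neg_sub_div_mul_rpow_le {c x u : ℝ} (p : ℝ) (hu : 0 < u) (hcx : c ≤ x) :
    ‖exp (-u - x / u) * u ^ p‖ ≤ exp (-u - c / u) * u ^ p := by
  rw [norm_of_nonneg (by have := rpow_pos_of_pos hu p; positivity)]
  gcongr

theorem integrableOn_exp_neg_sub_div_mul_rpow {b x : ℝ} (hb : 0 < b) (hx : 0 ≤ x) :
    IntegrableOn (fun u ↦ exp (-u - x / u) * u ^ (b - 1)) (Ioi 0) :=
  (GammaIntegral_convergent hb).mono'
    ((continuousOn_exp_neg_sub_div_mul_rpow x _).aestronglyMeasurable measurableSet_Ioi)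
    ((ae_restrict_mem measurableSet_Ioi).mono fun u hu ↦ by
      simpa using exp_neg_sub_div_mul_rpow_le (b - 1) hu hx)

theorem integral_exp_neg_sub_div_mul_rpow_sub_two (b : ℝ) {x : ℝ} (hx : 0 < x) :
    ∫ u in Ioi 0, exp (-u - x / u) * u ^ (b - 2) =
      x ^ (b - 1) * macdonaldIntegral (1 - b) x := by
  -- the substitution `u = x / t`, done as `u = x v` followed by `v = t⁻¹`
  set g : ℝ → ℝ := fun u ↦ exp (-u - x / u) * u ^ (b - 2)
  have hpt : ∀ t ∈ Ioi (0 : ℝ), (|(-1 : ℝ)| * t ^ ((-1 : ℝ) - 1)) • g (x * t ^ (-1 : ℝ)) =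
      x ^ (b - 2) * (exp (-t - x / t) * t ^ (1 - b - 1)) := fun t ht ↦ by
    have ht : 0 < t := ht
    simp only [g, smul_eq_mul, abs_neg, abs_one, one_mul, rpow_neg_one]
    rw [mul_rpow hx.le (inv_nonneg.2 ht.le), inv_rpow ht.le, show x / (x * t⁻¹) = t by
      field_simp]
    have hexp : -(x * t⁻¹) - t = -t - x / t := by ring
    have hpow : t ^ ((-1 : ℝ) - 1) * (t ^ (b - 2))⁻¹ = t ^ (1 - b - 1) := by
      rw [← rpow_neg ht.le, ← rpow_add ht]
      ring_nf
    rw [hexp, ← hpow]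
    ring
  calc ∫ u in Ioi 0, g u = x * ∫ v in Ioi 0, g (x * v) := by
        rw [← smul_eq_mul, integral_comp_mul_left_Ioi' _ _ hx, mul_zero]
    _ = x * ∫ t in Ioi 0, x ^ (b - 2) * (exp (-t - x / t) * t ^ (1 - b - 1)) := by
        rw [← integral_comp_rpow_Ioi (fun v ↦ g (x * v)) (by norm_num : (-1 : ℝ) ≠ 0),
          setIntegral_congr_fun measurableSet_Ioi hpt]
    _ = x ^ (b - 1) * macdonaldIntegral (1 - b) x := by
        rw [integral_const_mul, macdonaldIntegral, ← mul_assoc, mul_comm x,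
          ← rpow_add_one hx.ne']
        congr 2
        ring

theorem hasDerivAt_macdonaldIntegral {b x : ℝ} (hb : 0 < b) (hx : 0 < x) :
    HasDerivAt (macdonaldIntegral b) (-(x ^ (b - 1) * macdonaldIntegral (1 - b) x)) x := by
  have hpow : ∀ u : ℝ, 0 < u → u ^ (b - 1) = u ^ (b - 2) * u := fun u hu ↦ by
    rw [← rpow_add_one hu.ne']
    ring_nf
  have hderiv : ∀ u > 0, ∀ y, HasDerivAt (fun y ↦ exp (-u - y / u) * u ^ (b - 1))
      (-(exp (-u - y / u) * u ^ (b - 2))) y := fun u hu y ↦ by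
    refine ((((hasDerivAt_id y).div_const u).const_sub (-u)).exp.mul_const _).congr_deriv ?_
    rw [hpow u hu, id]
    field_simp
  have hbound : ∀ u > 0, ∀ y ∈ Metric.ball x (x / 2),
      ‖-(exp (-u - y / u) * u ^ (b - 2))‖ ≤ 2 / x * (exp (-u) * u ^ (b - 1)) := by
    intro u hu y hy
    have hxy : x / 2 ≤ y := by
      rw [Metric.mem_ball, dist_eq] at hy
      linarith [(abs_lt.1 hy).1]
    -- `exp t ≥ t` turns the factor `exp (-x / (2u))` into the missing power of `u`
    have hexp : exp (-(x / 2 / u)) ≤ u / (x / 2) := by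
      rw [exp_neg, inv_le_comm₀ (exp_pos _) (by positivity), inv_div]
      exact (le_add_of_nonneg_right zero_le_one).trans (add_one_le_exp _)
    rw [norm_neg]
    calc _ ≤ exp (-u - x / 2 / u) * u ^ (b - 2) := exp_neg_sub_div_mul_rpow_le _ hu hxy
      _ = exp (-u) * exp (-(x / 2 / u)) * u ^ (b - 2) := by rw [← exp_add, sub_eq_add_neg]
      _ ≤ exp (-u) * (u / (x / 2)) * u ^ (b - 2) := by gcongr
      _ = 2 / x * (exp (-u) * u ^ (b - 1)) := by
        rw [hpow u hu]
        field_simp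
  have h := (hasDerivAt_integral_of_dominated_loc_of_deriv_le (μ := volume.restrict (Ioi 0))
    (F := fun y u ↦ exp (-u - y / u) * u ^ (b - 1))
    (F' := fun y u ↦ -(exp (-u - y / u) * u ^ (b - 2))) (Metric.ball_mem_nhds x (half_pos hx))
    (.of_forall fun y ↦
      (continuousOn_exp_neg_sub_div_mul_rpow y _).aestronglyMeasurable measurableSet_Ioi)
    (integrableOn_exp_neg_sub_div_mul_rpow hb hx.le)
    ((continuousOn_exp_neg_sub_div_mul_rpow x _).neg.aestronglyMeasurable measurableSet_Ioi)
    ((ae_restrict_mem measurableSet_Ioi).mono fun u hu ↦ hbound u hu)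
    ((GammaIntegral_convergent hb).const_mul _)
    ((ae_restrict_mem measurableSet_Ioi).mono fun u hu y _ ↦ hderiv u hu y)).2
  rwa [integral_neg, integral_exp_neg_sub_div_mul_rpow_sub_two b hx] at h

theorem tendsto_macdonaldIntegral_zero {b : ℝ} (hb : 0 < b) :
    Tendsto (macdonaldIntegral b) (𝓝[>] 0) (𝓝 (Gamma b)) := by
  rw [Gamma_eq_integral hb]
  refine tendsto_integral_filter_of_dominated_convergence _
    (.of_forall fun y ↦
      (continuousOn_exp_neg_sub_div_mul_rpow y _).aestronglyMeasurable measurableSet_Ioi)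
    (eventually_nhdsWithin_of_forall fun y hy ↦ (ae_restrict_mem measurableSet_Ioi).mono
      fun u hu ↦ by simpa using exp_neg_sub_div_mul_rpow_le (b - 1) hu (le_of_lt hy))
    (GammaIntegral_convergent hb) (.of_forall fun u ↦ ?_)
  have hcont : Continuous fun y ↦ exp (-u - y / u) * u ^ (b - 1) := by fun_prop
  simpa using (hcont.tendsto 0).mono_left nhdsWithin_le_nhds

theorem tendsto_besselSeries_zero (c : ℝ) :
    Tendsto (besselSeries c) (𝓝[>] 0) (𝓝 (Gamma (c + 1))⁻¹) := by
  rw [← besselSeries_zero]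
  exact (hasDerivAt_besselSeries c 0).continuousAt.tendsto.mono_left nhdsWithin_le_nhds

theorem tendsto_rpow_mul_besselSeries_zero {b : ℝ} (hb : 0 < b) (c : ℝ) :
    Tendsto (fun x ↦ x ^ b * besselSeries c x) (𝓝[>] 0) (𝓝 0) := by
  have h := ((continuousAt_rpow_const 0 b (Or.inr hb.le)).tendsto.mono_left
    nhdsWithin_le_nhds).mul (tendsto_besselSeries_zero c)
  rwa [zero_rpow hb.ne', zero_mul] at h

theorem macdonaldIntegral_eq {b x : ℝ} (hb₀ : 0 < b) (hb₁ : b < 1) (hx : 0 < x) :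
    macdonaldIntegral b x =
      Gamma b * Gamma (1 - b) * (besselSeries (-b) x - x ^ b * besselSeries b x) := by
  have hb₁' : 0 < 1 - b := sub_pos.2 hb₁
  have hΦ : SolvesBesselSystem b (macdonaldIntegral b) (macdonaldIntegral (1 - b)) :=
    fun y hy ↦ ⟨hasDerivAt_macdonaldIntegral hb₀ hy, by
      simpa only [sub_sub_cancel, sub_sub_cancel_left] using hasDerivAt_macdonaldIntegral hb₁' hy⟩
  have hf := solvesBesselSystem_besselSeries b
  have hs := solvesBesselSystem_rpow_mul_besselSeries b
  have hΦ₁ := tendsto_macdonaldIntegral_zero hb₀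
  have hΦ₂ := tendsto_macdonaldIntegral_zero hb₁'
  have hf₁ : Tendsto (besselSeries (-b)) (𝓝[>] 0) (𝓝 (Gamma (1 - b))⁻¹) := by
    simpa [neg_add_eq_sub] using tendsto_besselSeries_zero (-b)
  have hf₂ := (tendsto_rpow_mul_besselSeries_zero hb₁' (1 - b)).neg
  have hs₁ := tendsto_rpow_mul_besselSeries_zero hb₀ b
  have hs₂ : Tendsto (fun y ↦ -besselSeries (b - 1) y) (𝓝[>] 0) (𝓝 (-(Gamma b)⁻¹)) := by
    simpa using (tendsto_besselSeries_zero (b - 1)).neg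
  have hΦf := hΦ.wronskian_eq hf hΦ₁ hΦ₂ hf₁ hf₂ hx
  have hΦs := hΦ.wronskian_eq hs hΦ₁ hΦ₂ hs₁ hs₂ hx
  have hfs := hf.wronskian_eq hs hf₁ hf₂ hs₁ hs₂ hx
  have hG₀ := (Gamma_pos_of_pos hb₀).ne'
  have hG₁ := (Gamma_pos_of_pos hb₁').ne'
  field_simp at hΦf hΦs hfs
  -- Cramer's rule: `Φ W(f, s) = f W(Φ, s) - s W(Φ, f)` for any three vectors of the plane
  linear_combination macdonaldIntegral b x * hfs
    - Gamma b * Gamma (1 - b) * besselSeries (-b) x * hΦs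
    + Gamma b * Gamma (1 - b) * (x ^ b * besselSeries b x) * hΦf

theorem besselSeries_neg_sub_rpow_mul_nonneg {b x : ℝ} (hb₀ : 0 < b) (hb₁ : b < 1)
    (hx : 0 < x) : 0 ≤ besselSeries (-b) x - x ^ b * besselSeries b x := by
  have hΓ : 0 < Gamma b * Gamma (1 - b) :=
    mul_pos (Gamma_pos_of_pos hb₀) (Gamma_pos_of_pos (sub_pos.2 hb₁))
  have hΦ := macdonaldIntegral_nonneg b x
  rw [macdonaldIntegral_eq hb₀ hb₁ hx] at hΦ
  exact nonneg_of_mul_nonneg_right hΦ hΓ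

theorem besselI_eq_rpow_mul_besselSeries (ν : ℝ) {z : ℝ} (hz : 0 < z) :
    besselI ν z = (z / 2) ^ ν * besselSeries ν ((z / 2) ^ 2) := by
  have hw : 0 < z / 2 := half_pos hz
  rw [besselI, besselSeries, ← tsum_mul_left]
  congr 1 with k
  rw [besselCoeff, rpow_add hw, rpow_mul hw.le, rpow_natCast, rpow_two, div_eq_mul_inv]
  ring

/-- For `-1 < ν < 0` and `z > 0`, `I_ν(z) - I_{-ν}(z) ≥ 0`. -/
theorem besselI_sub_besselI_neg_nonneg (ν z : ℝ) (hν₁ : -1 < ν) (hν₂ : ν < 0) (hz : 0 < z) :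
    0 ≤ besselI ν z - besselI (-ν) z := by
  have hw : 0 < z / 2 := half_pos hz
  have key := besselSeries_neg_sub_rpow_mul_nonneg (b := -ν) (by linarith) (by linarith)
    (pow_pos hw 2)
  rw [neg_neg] at key
  have hpow : (z / 2) ^ ν * ((z / 2) ^ 2) ^ (-ν) = (z / 2) ^ (-ν) := by
    rw [← rpow_two, ← rpow_mul hw.le, ← rpow_add hw]
    ring_nf
  calc 0 ≤ (z / 2) ^ ν * (besselSeries ν ((z / 2) ^ 2) -
        ((z / 2) ^ 2) ^ (-ν) * besselSeries (-ν) ((z / 2) ^ 2)) :=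
        mul_nonneg (rpow_nonneg hw.le _) key
    _ = besselI ν z - besselI (-ν) z := by
      rw [besselI_eq_rpow_mul_besselSeries ν hz, besselI_eq_rpow_mul_besselSeries (-ν) hz,
        ← hpow]
      ring
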